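/- Let (Z_1, …, Z_L) be a (β, d, L)-decomposition of a graph G with arboricity at most α, where d ≥ 2(1+ε)α and ε > 0. Then for every i ∈ [L−1], |Z_{i+1}| ≤ |Z_i|/(1+ε). -/

import Mathlib

open Finset

open scoped Classical in
/-- The edges of the subgraph of `G` induced by the vertex set `S`. -/
noncomputable def inducedEdges {V : Type*} [Fintype V] [DecidableEq V]
    (G : SimpleGraph V) [DecidableRel G.Adj] (S : Finset V) : Finset (Sym2 V) :=
  G.edgeFinset.filter (fun e => ∀ x ∈ e, x ∈ S)

/-- `G` has arboricity at most `α`. -/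
def ArboricityLE {V : Type*} [Fintype V] [DecidableEq V]
    (G : SimpleGraph V) [DecidableRel G.Adj] (α : ℝ) : Prop :=
  ∀ S : Finset V, 2 ≤ S.card → ((inducedEdges G S).card : ℝ) ≤ α * ((S.card : ℝ) - 1)

/-- The degree of `u` in the subgraph of `G` induced by `Z`. -/
def degIn {V : Type*} [Fintype V] [DecidableEq V]
    (G : SimpleGraph V) [DecidableRel G.Adj] (Z : Finset V) (u : V) : ℕ :=
  (Z.filter (fun w => G.Adj u w)).card

/-- A `(β, d, L)`-decomposition of `G`: a nested sequence
`Z L ⊆ ⋯ ⊆ Z 1 = V` such that for all `i ∈ [L-1]`, every vertex of `Z i` of degree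
`> β d` in `G[Z i]` lies in `Z (i+1)`, and no vertex of `Z i` of degree `< d` in
`G[Z i]` lies in `Z (i+1)`. -/
def IsDecomposition {V : Type*} [Fintype V] [DecidableEq V]
    (G : SimpleGraph V) [DecidableRel G.Adj] (β d : ℝ) (L : ℕ)
    (Z : ℕ → Finset V) : Prop :=
  Z 1 = Finset.univ ∧
  (∀ i, 1 ≤ i → i < L → Z (i + 1) ⊆ Z i) ∧
  (∀ i, 1 ≤ i → i < L → ∀ u ∈ Z i,
    (β * d < (degIn G (Z i) u : ℝ) → u ∈ Z (i + 1)) ∧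
    ((degIn G (Z i) u : ℝ) < d → u ∉ Z (i + 1)))

/-! Every vertex kept in `Z (i+1)` has degree at least `d` in `G[Z i]`, so by the handshake lemma
`d |Z (i+1)| ≤ 2 |E(G[Z i])| ≤ 2α |Z i|`; since `d ≥ 2(1+ε)α`, dividing by `2α` gives the claim. -/

section InducedEdges

variable {V : Type*} [Fintype V] [DecidableEq V] (G : SimpleGraph V) [DecidableRel G.Adj]

theorem sum_degIn_eq_two_mul_card_inducedEdges (S : Finset V) :
    ∑ u ∈ S, degIn G S u = 2 * (inducedEdges G S).card := by
  classical
  let H := ((⊤ : G.Subgraph).induce (S : Set V)).spanningCoe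
  have hdeg : ∀ u, H.degree u = if u ∈ S then degIn G S u else 0 := by
    intro u
    split_ifs with hu
    · rw [← SimpleGraph.card_neighborFinset_eq_degree, degIn]
      congr 1
      ext w
      simp [H, hu]
    · rw [← SimpleGraph.card_neighborFinset_eq_degree, Finset.card_eq_zero]
      ext w
      simp [H, hu]
  have hedges : H.edgeFinset = inducedEdges G S := by
    ext e
    induction e with
    | _ a b => simpa [H, inducedEdges] using and_rotate.symm
  rw [← hedges, ← SimpleGraph.sum_degrees_eq_twice_card_edges]
  simp_rw [hdeg, Finset.sum_ite_mem, Finset.univ_inter]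

theorem card_inducedEdges_eq_zero_of_card_lt_two {S : Finset V} (hS : S.card < 2) :
    (inducedEdges G S).card = 0 := by
  refine Finset.card_eq_zero.mpr (Finset.filter_eq_empty_iff.mpr fun e he hS' => ?_)
  induction e with
  | _ a b =>
    have hab : G.Adj a b := by simpa using he
    exact hS.not_ge (Finset.one_lt_card.mpr
      ⟨a, hS' a (Sym2.mem_mk_left a b), b, hS' b (Sym2.mem_mk_right a b), hab.ne⟩)

theorem mul_card_le_two_mul_card_inducedEdges {S T : Finset V} (hTS : T ⊆ S) {d : ℝ}
    (hdeg : ∀ u ∈ T, d ≤ degIn G S u) : d * T.card ≤ 2 * (inducedEdges G S).card := by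
  calc d * T.card = ∑ _u ∈ T, d := by rw [Finset.sum_const, nsmul_eq_mul, mul_comm]
    _ ≤ ∑ u ∈ T, (degIn G S u : ℝ) := Finset.sum_le_sum hdeg
    _ ≤ ∑ u ∈ S, (degIn G S u : ℝ) := Finset.sum_le_sum_of_subset_of_nonneg hTS (by simp)
    _ = 2 * (inducedEdges G S).card := by
      exact_mod_cast sum_degIn_eq_two_mul_card_inducedEdges G S

variable {G} in
theorem ArboricityLE.card_inducedEdges_le {α : ℝ} (hG : ArboricityLE G α) (hα : 0 ≤ α)
    (S : Finset V) : ((inducedEdges G S).card : ℝ) ≤ α * S.card := by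
  rcases lt_or_ge S.card 2 with hS | hS
  · rw [card_inducedEdges_eq_zero_of_card_lt_two G hS, Nat.cast_zero]
    positivity
  · linarith [hG S hS]

end InducedEdges

namespace IsDecomposition

variable {V : Type*} [Fintype V] [DecidableEq V] {G : SimpleGraph V} [DecidableRel G.Adj]
  {β d : ℝ} {L : ℕ} {Z : ℕ → Finset V}

theorem le_degIn (hZ : IsDecomposition G β d L Z) {i : ℕ} (hi : 1 ≤ i) (hiL : i < L)
    {u : V} (hu : u ∈ Z (i + 1)) : d ≤ degIn G (Z i) u :=
  le_of_not_gt fun hlt => (hZ.2.2 i hi hiL u (hZ.2.1 i hi hiL hu)).2 hlt hu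

theorem mul_card_succ_le (hZ : IsDecomposition G β d L Z) {α : ℝ} (hG : ArboricityLE G α)
    (hα : 0 ≤ α) {i : ℕ} (hi : 1 ≤ i) (hiL : i < L) :
    d * (Z (i + 1)).card ≤ 2 * α * (Z i).card := by
  calc d * (Z (i + 1)).card ≤ 2 * (inducedEdges G (Z i)).card :=
        mul_card_le_two_mul_card_inducedEdges G (hZ.2.1 i hi hiL) fun _ => hZ.le_degIn hi hiL
    _ ≤ 2 * α * (Z i).card := by linarith [hG.card_inducedEdges_le hα (Z i)]

end IsDecomposition

theorem statement4_general {V : Type*} [Fintype V] [DecidableEq V]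
    (G : SimpleGraph V) [DecidableRel G.Adj] (α ε β d : ℝ)
    (hα : 0 < α) (hε : 0 < ε)
    (hd : 2 * (1 + ε) * α ≤ d) (L : ℕ)
    (hG : ArboricityLE G α) (Z : ℕ → Finset V)
    (hZ : IsDecomposition G β d L Z) :
    ∀ i, 1 ≤ i → i < L → ((Z (i + 1)).card : ℝ) ≤ (Z i).card / (1 + ε) := by
  intro i hi hiL
  have hshrink := hZ.mul_card_succ_le hG hα.le hi hiL
  have hd_card : 2 * (1 + ε) * α * (Z (i + 1)).card ≤ d * (Z (i + 1)).card :=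
    mul_le_mul_of_nonneg_right hd (Nat.cast_nonneg _)
  rw [le_div_iff₀ (by linarith)]
  refine le_of_mul_le_mul_left ?_ (by positivity : (0 : ℝ) < 2 * α)
  linarith

/-- in a `(β, d, L)`-decomposition of a graph of arboricity at most `α`
with `d ≥ 2(1+ε)α` and `ε > 0`, each level set shrinks: `|Z (i+1)| ≤ |Z i|/(1+ε)`
for all `i ∈ [L-1]`. -/
theorem statement4 {V : Type*} [Fintype V] [DecidableEq V]
    (G : SimpleGraph V) [DecidableRel G.Adj] (α ε β d : ℝ)
    (hα : 0 < α) (hε : 0 < ε) (hβ : 1 ≤ β)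
    (hd : 2 * (1 + ε) * α ≤ d) (L : ℕ)
    (hG : ArboricityLE G α) (Z : ℕ → Finset V)
    (hZ : IsDecomposition G β d L Z) :
    ∀ i, 1 ≤ i → i < L → ((Z (i + 1)).card : ℝ) ≤ (Z i).card / (1 + ε) :=
  statement4_general G α ε β d hα hε hd L hG Z hZ
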